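/- Let q be a prime power, let M ≥ 1 and d ≥ 1 be integers, and let h = (h_0, …, h_M) and h′ = (h′_0, …, h′_M) be probability vectors with h′ ⪯ h. Define f(x, h) = 1 − ∑_{r=1}^M h_r ∑_{s=0}^{min(d−1, r−1)} C(d−1, s) x^s (1−x)^{d−1−s} ζ_{s+1}^r. Then for every x ∈ [0, 1], f(x, h) ≤ f(x, h′). -/

import Mathlib

/-- `ζ_r^m = ∏_{i=0}^{r-1} (1 - q^{-m+i})`. -/
noncomputable def zeta (q r m : ℕ) : ℝ :=
  ∏ i ∈ Finset.range r, (1 - (q : ℝ) ^ ((i : ℤ) - (m : ℤ)))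

/-- The approximate batch-check-node update function of density evolution:
`f(x, h) = 1 − ∑_{r=1}^M h_r ∑_{s=0}^{min(d−1,r−1)} C(d−1,s) x^s (1−x)^{d−1−s} ζ_{s+1}^r`. -/
noncomputable def fBCN (q M d : ℕ) (h : ℕ → ℝ) (x : ℝ) : ℝ :=
  1 - ∑ r ∈ Finset.Icc 1 M, h r *
    ∑ s ∈ Finset.range (min (d - 1) (r - 1) + 1),
      (Nat.choose (d - 1) s : ℝ) * x ^ s * (1 - x) ^ (d - 1 - s) * zeta q (s + 1) r

lemma zeta_nonneg {q : ℕ} (hq : (1:ℝ) ≤ q) {n m : ℕ} (hnm : n ≤ m) :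
    0 ≤ zeta q n m := by
  apply Finset.prod_nonneg
  intro i hi
  rw [Finset.mem_range] at hi
  have : (q : ℝ) ^ ((i : ℤ) - (m : ℤ)) ≤ (q:ℝ) ^ (0:ℤ) :=
    zpow_le_zpow_right₀ hq (by omega)
  simpa using this

lemma zeta_mono {q : ℕ} (hq : (1:ℝ) ≤ q) {n m m' : ℕ} (hnm : n ≤ m) (hmm : m ≤ m') :
    zeta q n m ≤ zeta q n m' := by
  apply Finset.prod_le_prod
  · intro i hi
    rw [Finset.mem_range] at hi
    have : (q : ℝ) ^ ((i : ℤ) - (m : ℤ)) ≤ (q:ℝ) ^ (0:ℤ) :=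
      zpow_le_zpow_right₀ hq (by omega)
    simpa using this
  · intro i _
    have : (q : ℝ) ^ ((i : ℤ) - (m' : ℤ)) ≤ (q:ℝ) ^ ((i : ℤ) - (m : ℤ)) :=
      zpow_le_zpow_right₀ hq (by omega)
    linarith

/-- Abel-summation comparison: if `g` is nonnegative at `1` and nondecreasing
on `[1, ∞)`, and the tails of `a'` are dominated by the tails of `a`, then
`∑ a' r * g r ≤ ∑ a r * g r`. -/
lemma abel_compare (M : ℕ) (a a' g : ℕ → ℝ)
    (hg1 : 0 ≤ g 1)
    (hmono : ∀ k, 1 ≤ k → g k ≤ g (k + 1))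
    (hdom : ∀ k, 1 ≤ k → k ≤ M →
      ∑ r ∈ Finset.Icc k M, a' r ≤ ∑ r ∈ Finset.Icc k M, a r) :
    ∑ r ∈ Finset.Icc 1 M, a' r * g r ≤ ∑ r ∈ Finset.Icc 1 M, a r * g r := by
  set G : ℕ → ℝ := fun n => if n = 0 then 0 else g n with hG
  have hTel : ∀ r, 1 ≤ r → ∑ k ∈ Finset.Icc 1 r, (G k - G (k - 1)) = g r := by
    intro r hr
    induction r, hr using Nat.le_induction with
    | base => simp [hG]
    | succ n hn ih =>
      rw [Finset.sum_Icc_succ_top (by omega), ih]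
      have h1 : G (n + 1) = g (n + 1) := if_neg (by omega)
      have h2 : G (n + 1 - 1) = g n := by
        have : n + 1 - 1 = n := rfl
        rw [this]
        exact if_neg (by omega)
      rw [h1, h2]; ring
  have filt1 : ∀ r, r ≤ M →
      (Finset.Icc 1 M).filter (fun k => k ≤ r) = Finset.Icc 1 r := by
    intro r hr; ext k
    simp only [Finset.mem_filter, Finset.mem_Icc]; omega
  have filt2 : ∀ k, 1 ≤ k →
      (Finset.Icc 1 M).filter (fun r => k ≤ r) = Finset.Icc k M := by
    intro k hk; ext r
    simp only [Finset.mem_filter, Finset.mem_Icc]; omega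
  have key : ∀ b : ℕ → ℝ, ∑ r ∈ Finset.Icc 1 M, b r * g r
      = ∑ k ∈ Finset.Icc 1 M, (G k - G (k - 1)) * ∑ r ∈ Finset.Icc k M, b r := by
    intro b
    calc ∑ r ∈ Finset.Icc 1 M, b r * g r
        = ∑ r ∈ Finset.Icc 1 M, ∑ k ∈ Finset.Icc 1 M,
            (if k ≤ r then b r * (G k - G (k - 1)) else 0) := by
          refine Finset.sum_congr rfl ?_
          intro r hr; rw [Finset.mem_Icc] at hr
          rw [← Finset.sum_filter, filt1 r hr.2, ← hTel r hr.1, Finset.mul_sum]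
      _ = ∑ k ∈ Finset.Icc 1 M, ∑ r ∈ Finset.Icc 1 M,
            (if k ≤ r then b r * (G k - G (k - 1)) else 0) := Finset.sum_comm
      _ = ∑ k ∈ Finset.Icc 1 M, (G k - G (k - 1)) * ∑ r ∈ Finset.Icc k M, b r := by
          refine Finset.sum_congr rfl ?_
          intro k hk; rw [Finset.mem_Icc] at hk
          rw [← Finset.sum_filter, filt2 k hk.1, Finset.mul_sum]
          exact Finset.sum_congr rfl fun r _ => mul_comm _ _
  rw [key a, key a']
  apply Finset.sum_le_sum
  intro k hk; rw [Finset.mem_Icc] at hk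
  have hΔ : 0 ≤ G k - G (k - 1) := by
    rcases eq_or_lt_of_le hk.1 with h1 | h1
    · have : G k - G (k - 1) = g 1 := by
        rw [← h1]; simp [hG]
      rw [this]; exact hg1
    · have hgk : G k = g k := if_neg (by omega)
      have hgk1 : G (k - 1) = g (k - 1) := if_neg (by omega)
      have := hmono (k - 1) (by omega)
      have hkk : k - 1 + 1 = k := by omega
      rw [hkk] at this
      rw [hgk, hgk1]; linarith
  exact mul_le_mul_of_nonneg_left (hdom k hk.1 hk.2) hΔ

/-- For probability vectors `h, h′` with `h′ ⪯ h`
(i.e. `∑_{i=k}^M h′_i ≤ ∑_{i=k}^M h_i` for every `k`), the approximate batch-check-node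
update satisfies `f(x, h) ≤ f(x, h′)` for every `x ∈ [0, 1]`. -/
theorem fBCN_monotone_in_h
    (q M d : ℕ) (hq : IsPrimePow q) (hM : 1 ≤ M) (hd : 1 ≤ d)
    (h h' : ℕ → ℝ)
    (hpos : ∀ r, r ≤ M → 0 ≤ h r) (hsum : ∑ r ∈ Finset.range (M + 1), h r = 1)
    (hpos' : ∀ r, r ≤ M → 0 ≤ h' r) (hsum' : ∑ r ∈ Finset.range (M + 1), h' r = 1)
    (hdom : ∀ k, k ≤ M → ∑ i ∈ Finset.Icc k M, h' i ≤ ∑ i ∈ Finset.Icc k M, h i) :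
    ∀ x : ℝ, 0 ≤ x → x ≤ 1 → fBCN q M d h x ≤ fBCN q M d h' x := by
  intro x hx0 hx1
  have hq1 : (1:ℝ) ≤ q := by
    have := hq.two_le
    exact_mod_cast Nat.one_le_iff_ne_zero.mpr (by omega)
  set g : ℕ → ℝ := fun r => ∑ s ∈ Finset.range (min (d - 1) (r - 1) + 1),
      (Nat.choose (d - 1) s : ℝ) * x ^ s * (1 - x) ^ (d - 1 - s) * zeta q (s + 1) r
    with hg
  have hterm : ∀ s r : ℕ, s + 1 ≤ r →
      0 ≤ (Nat.choose (d - 1) s : ℝ) * x ^ s * (1 - x) ^ (d - 1 - s) * zeta q (s + 1) r := by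
    intro s r hsr
    apply mul_nonneg
    apply mul_nonneg
    apply mul_nonneg
    · exact_mod_cast Nat.zero_le _
    · exact pow_nonneg hx0 _
    · exact pow_nonneg (by linarith) _
    · exact zeta_nonneg hq1 hsr
  have hg1 : 0 ≤ g 1 := by
    apply Finset.sum_nonneg
    intro s hs
    rw [Finset.mem_range] at hs
    exact hterm s 1 (by omega)
  have hmono : ∀ k, 1 ≤ k → g k ≤ g (k + 1) := by
    intro k hk
    simp only [hg]
    calc ∑ s ∈ Finset.range (min (d - 1) (k - 1) + 1),
          (Nat.choose (d - 1) s : ℝ) * x ^ s * (1 - x) ^ (d - 1 - s) * zeta q (s + 1) k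
        ≤ ∑ s ∈ Finset.range (min (d - 1) (k - 1) + 1),
          (Nat.choose (d - 1) s : ℝ) * x ^ s * (1 - x) ^ (d - 1 - s) * zeta q (s + 1) (k + 1) := by
          apply Finset.sum_le_sum
          intro s hs
          rw [Finset.mem_range] at hs
          have h1 : s + 1 ≤ k := by omega
          apply mul_le_mul_of_nonneg_left (zeta_mono hq1 h1 (by omega))
          apply mul_nonneg
          apply mul_nonneg
          · exact_mod_cast Nat.zero_le _
          · exact pow_nonneg hx0 _
          · exact pow_nonneg (by linarith) _
      _ ≤ ∑ s ∈ Finset.range (min (d - 1) (k + 1 - 1) + 1),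
          (Nat.choose (d - 1) s : ℝ) * x ^ s * (1 - x) ^ (d - 1 - s) * zeta q (s + 1) (k + 1) := by
          apply Finset.sum_le_sum_of_subset_of_nonneg
          · apply Finset.range_subset_range.mpr; omega
          · intro s hs _
            rw [Finset.mem_range] at hs
            exact hterm s (k + 1) (by omega)
  have main : ∑ r ∈ Finset.Icc 1 M, h' r * g r ≤ ∑ r ∈ Finset.Icc 1 M, h r * g r :=
    abel_compare M h h' g hg1 hmono (fun k hk1 hkM => hdom k hkM)
  unfold fBCN
  linarith [main]
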